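/- Let n ≥ 1 be an integer, 0 < α < n and γ ≥ 0. Let φ : (0,∞) → (0,∞) be such that r ↦ φ(r) r^n is almost increasing, and define f₀(x) := φ(|x|) for x ≠ 0. Then there exists a constant C > 0 (depending only on n, α, γ) such that for every x ∈ ℝⁿ with x ≠ 0, I_{α,γ}f₀(x) ≥ ∫_{B(x,2|x|)} K_{α,γ}(x−y) f₀(y) dy ≥ C φ(|x|) |x|^n K_{α,γ}(x). -/

import Mathlib

open MeasureTheory Metric
open scoped ENNReal NNReal

/-- The Riesz kernel `K_α(x) = |x|^{α-n}`. -/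
noncomputable def rieszKernel (n : ℕ) (α : ℝ) (x : EuclideanSpace ℝ (Fin n)) : ℝ :=
  ‖x‖ ^ (α - (n : ℝ))

/-- The Bessel-Riesz kernel `K_{α,γ}(x) = |x|^{α-n} / (1+|x|)^γ`. -/
noncomputable def besselRieszKernel (n : ℕ) (α γ : ℝ) (x : EuclideanSpace ℝ (Fin n)) : ℝ :=
  ‖x‖ ^ (α - (n : ℝ)) / (1 + ‖x‖) ^ γ

/-- The Bessel-Riesz operator `I_{α,γ} f (x) = ∫ K_{α,γ}(x-y) f(y) dy`. -/
noncomputable def besselRiesz (n : ℕ) (α γ : ℝ)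
    (f : EuclideanSpace ℝ (Fin n) → ℝ) (x : EuclideanSpace ℝ (Fin n)) : ℝ :=
  ∫ y, besselRieszKernel n α γ (x - y) * f y

/-- The Morrey norm `‖f‖_{L^{p,q}} = sup_B |B|^{1/q-1/p} (∫_B |f|^p)^{1/p}`. -/
noncomputable def morreyNorm (n : ℕ) (p q : ℝ)
    (f : EuclideanSpace ℝ (Fin n) → ℝ) : ℝ≥0∞ :=
  ⨆ (a : EuclideanSpace ℝ (Fin n)) (R : ℝ) (_ : 0 < R),
    volume (ball a R) ^ (1 / q - 1 / p) *
      (∫⁻ x in ball a R, ENNReal.ofReal (|f x| ^ p)) ^ (1 / p)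

/-- The generalized Morrey norm
`‖f‖_{L^{p,φ}} = sup_B (1/φ(R)) ((1/|B|) ∫_B |f|^p)^{1/p}`. -/
noncomputable def gMorreyNorm (n : ℕ) (p : ℝ) (φ : ℝ → ℝ)
    (f : EuclideanSpace ℝ (Fin n) → ℝ) : ℝ≥0∞ :=
  ⨆ (a : EuclideanSpace ℝ (Fin n)) (R : ℝ) (_ : 0 < R),
    (ENNReal.ofReal (φ R))⁻¹ *
      ((volume (ball a R))⁻¹ * ∫⁻ x in ball a R, ENNReal.ofReal (|f x| ^ p)) ^ (1 / p)

/-- `φ : (0,∞) → (0,∞)` is of class `G_p`: positive on `(0,∞)`, almost decreasing, and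
`r ↦ φ(r)^p r^n` is almost increasing. -/
def IsClassG (n : ℕ) (p : ℝ) (φ : ℝ → ℝ) : Prop :=
  (∀ r : ℝ, 0 < r → 0 < φ r) ∧
  (∃ C : ℝ, 0 < C ∧ ∀ r s : ℝ, 0 < r → r ≤ s → C * φ s ≤ φ r) ∧
  (∃ C : ℝ, 0 < C ∧ ∀ r s : ℝ, 0 < r → r ≤ s →
    φ r ^ p * r ^ (n : ℝ) ≤ C * (φ s ^ p * s ^ (n : ℝ)))

/-- `ρ` is almost increasing on `(0,∞)`. -/
def IsAlmostIncreasing (ρ : ℝ → ℝ) : Prop :=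
  ∃ C : ℝ, 0 < C ∧ ∀ r s : ℝ, 0 < r → r ≤ s → ρ r ≤ C * ρ s

/-- Operator norm of `I_{α,γ}` from `L^{p₁,φ}` to `L^{p₂,ψ}`. -/
noncomputable def besselRieszOpNormGM (n : ℕ) (α γ p₁ p₂ : ℝ) (φ ψ : ℝ → ℝ) : ℝ≥0∞ :=
  ⨆ f : {f : EuclideanSpace ℝ (Fin n) → ℝ //
      Measurable f ∧ gMorreyNorm n p₁ φ f ≠ 0 ∧ gMorreyNorm n p₁ φ f ≠ ⊤},
    gMorreyNorm n p₂ ψ (besselRiesz n α γ f.1) / gMorreyNorm n p₁ φ f.1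

/-! For `y` in the ball `B(2x, |x|) ⊆ B(x, 2|x|)` we have `|x| ≤ |y| ≤ 3|x|` and
`0 < |x - y| < 2|x|`. Hence `K_{α,γ}(x - y) ≳ K_{α,γ}(x)` because the kernel is radially
decreasing with controlled doubling, and `φ(|y|) ≳ φ(|x|)` because `φ(r) r^n` is almost
increasing. Integrating this pointwise bound over `B(2x, |x|)`, whose volume is `ω_n |x|^n`,
gives the claim. -/

section BallGeometry

variable {E : Type*} [NormedAddCommGroup E] [NormedSpace ℝ E] {x y : E}

lemma norm_le_norm_of_mem_ball_two_smul (hy : y ∈ ball ((2 : ℝ) • x) ‖x‖) : ‖x‖ ≤ ‖y‖ := by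
  have h := norm_sub_norm_le ((2 : ℝ) • x) ((2 : ℝ) • x - y)
  rw [sub_sub_cancel, norm_smul, Real.norm_two, ← dist_eq_norm, dist_comm] at h
  linarith [mem_ball.mp hy]

lemma norm_le_three_mul_of_mem_ball_two_smul (hy : y ∈ ball ((2 : ℝ) • x) ‖x‖) :
    ‖y‖ ≤ 3 * ‖x‖ := by
  have h := norm_le_norm_add_norm_sub' y ((2 : ℝ) • x)
  rw [norm_smul, Real.norm_two, ← dist_eq_norm] at h
  linarith [mem_ball.mp hy]

lemma dist_two_smul_self (x : E) : dist ((2 : ℝ) • x) x = ‖x‖ := by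
  rw [dist_eq_norm, two_smul, add_sub_cancel_right]

lemma norm_sub_pos_of_mem_ball_two_smul (hy : y ∈ ball ((2 : ℝ) • x) ‖x‖) : 0 < ‖x - y‖ := by
  have h := dist_triangle ((2 : ℝ) • x) y x
  rw [dist_two_smul_self, dist_comm _ y] at h
  rw [← dist_eq_norm, dist_comm]
  linarith [mem_ball.mp hy]

lemma norm_sub_lt_of_mem_ball_two_smul (hy : y ∈ ball ((2 : ℝ) • x) ‖x‖) :
    ‖x - y‖ < 2 * ‖x‖ := by
  have h := dist_triangle x ((2 : ℝ) • x) y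
  rw [dist_comm x ((2 : ℝ) • x), dist_two_smul_self] at h
  rw [← dist_eq_norm]
  linarith [mem_ball'.mp hy]

lemma ball_two_smul_subset_ball (x : E) : ball ((2 : ℝ) • x) ‖x‖ ⊆ ball x (2 * ‖x‖) :=
  fun y hy => by
    rw [mem_ball, dist_eq_norm, norm_sub_rev]
    exact norm_sub_lt_of_mem_ball_two_smul hy

end BallGeometry

lemma besselRieszKernel_nonneg (n : ℕ) (α γ : ℝ) (x : EuclideanSpace ℝ (Fin n)) :
    0 ≤ besselRieszKernel n α γ x := by
  unfold besselRieszKernel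
  positivity

lemma rpow_mul_besselRieszKernel_le {n : ℕ} {α γ c : ℝ} (hαn : α ≤ n) (hγ : 0 ≤ γ) (hc : 1 ≤ c)
    {x z : EuclideanSpace ℝ (Fin n)} (hz : 0 < ‖z‖) (hzx : ‖z‖ ≤ c * ‖x‖) :
    c ^ (α - n - γ) * besselRieszKernel n α γ x ≤ besselRieszKernel n α γ z := by
  have hc0 : 0 < c := by linarith
  unfold besselRieszKernel
  calc c ^ (α - n - γ) * (‖x‖ ^ (α - n) / (1 + ‖x‖) ^ γ)
      = (c * ‖x‖) ^ (α - n) / (c * (1 + ‖x‖)) ^ γ := by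
        rw [Real.mul_rpow hc0.le (norm_nonneg x), Real.mul_rpow hc0.le (by positivity),
          Real.rpow_sub hc0]
        field_simp
    _ ≤ ‖z‖ ^ (α - n) / (1 + ‖z‖) ^ γ := by
        refine div_le_div₀ (by positivity) (Real.rpow_le_rpow_of_nonpos hz hzx (by linarith))
          (by positivity) (Real.rpow_le_rpow (by positivity) ?_ hγ)
        nlinarith

lemma IsAlmostIncreasing.exists_le_mul_rpow {φ : ℝ → ℝ} {d : ℝ} (hd : 0 ≤ d)
    (hφ : ∀ r : ℝ, 0 < r → 0 ≤ φ r) (h : IsAlmostIncreasing (fun r => φ r * r ^ d)) :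
    ∃ C : ℝ, 0 < C ∧ ∀ c r s : ℝ, 0 < r → r ≤ s → s ≤ c * r → φ r ≤ C * c ^ d * φ s := by
  obtain ⟨C, hC, hinc⟩ := h
  refine ⟨C, hC, fun c r s hr hrs hsc => ?_⟩
  have hc : 0 < c := by nlinarith
  have hs : 0 < s := hr.trans_le hrs
  refine le_of_mul_le_mul_right ?_ (Real.rpow_pos_of_pos hr d)
  calc φ r * r ^ d ≤ C * (φ s * s ^ d) := hinc r s hr hrs
    _ ≤ C * (φ s * (c * r) ^ d) := by
        gcongr
        · exact hφ s hs
    _ = C * c ^ d * φ s * r ^ d := by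
        rw [Real.mul_rpow hc.le hr.le]
        ring

lemma ofReal_mul_rpow_le_setLIntegral_ball {n : ℕ} {f : EuclideanSpace ℝ (Fin n) → ℝ≥0∞}
    {a : EuclideanSpace ℝ (Fin n)} {r b : ℝ} (hr : 0 < r)
    (hf : ∀ y ∈ ball a r, ENNReal.ofReal b ≤ f y) :
    ENNReal.ofReal (b * r ^ (n : ℝ) * (volume (ball (0 : EuclideanSpace ℝ (Fin n)) 1)).toReal) ≤
      ∫⁻ y in ball a r, f y := by
  calc ENNReal.ofReal (b * r ^ (n : ℝ) * (volume (ball (0 : EuclideanSpace ℝ (Fin n)) 1)).toReal)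
      = ∫⁻ _ in ball a r, ENNReal.ofReal b := by
        rw [setLIntegral_const, Measure.addHaar_ball_of_pos volume a hr, finrank_euclideanSpace_fin,
          mul_assoc, ENNReal.ofReal_mul' (by positivity), ENNReal.ofReal_mul (by positivity),
          ENNReal.ofReal_toReal measure_ball_lt_top.ne, Real.rpow_natCast]
    _ ≤ ∫⁻ y in ball a r, f y := setLIntegral_mono' measurableSet_ball hf

lemma exists_mul_le_besselRieszKernel_mul_of_mem_ball_two_smul {n : ℕ} {α γ : ℝ} {φ : ℝ → ℝ}
    (hαn : α < n) (hγ : 0 ≤ γ) (hφpos : ∀ r : ℝ, 0 < r → 0 < φ r)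
    (hφinc : IsAlmostIncreasing (fun r => φ r * r ^ (n : ℝ))) :
    ∃ c : ℝ, 0 < c ∧ ∀ x y : EuclideanSpace ℝ (Fin n), y ∈ ball ((2 : ℝ) • x) ‖x‖ →
      c * (φ ‖x‖ * besselRieszKernel n α γ x) ≤ besselRieszKernel n α γ (x - y) * φ ‖y‖ := by
  obtain ⟨C, hC, hφ⟩ :=
    hφinc.exists_le_mul_rpow (Nat.cast_nonneg n) fun r hr => (hφpos r hr).le
  refine ⟨2 ^ (α - n - γ) / (C * 3 ^ (n : ℝ)), by positivity, fun x y hy => ?_⟩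
  have hx : 0 < ‖x‖ := pos_of_mem_ball hy
  have hxy := norm_le_norm_of_mem_ball_two_smul hy
  have hφy : φ ‖x‖ / (C * 3 ^ (n : ℝ)) ≤ φ ‖y‖ := by
    rw [div_le_iff₀ (by positivity), mul_comm]
    exact hφ 3 ‖x‖ ‖y‖ hx hxy (norm_le_three_mul_of_mem_ball_two_smul hy)
  have hK : 2 ^ (α - n - γ) * besselRieszKernel n α γ x ≤ besselRieszKernel n α γ (x - y) :=
    rpow_mul_besselRieszKernel_le hαn.le hγ one_le_two (norm_sub_pos_of_mem_ball_two_smul hy)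
      (norm_sub_lt_of_mem_ball_two_smul hy).le
  calc 2 ^ (α - n - γ) / (C * 3 ^ (n : ℝ)) * (φ ‖x‖ * besselRieszKernel n α γ x)
      = 2 ^ (α - n - γ) * besselRieszKernel n α γ x * (φ ‖x‖ / (C * 3 ^ (n : ℝ))) := by ring
    _ ≤ besselRieszKernel n α γ (x - y) * φ ‖y‖ :=
        mul_le_mul hK hφy (div_nonneg (hφpos _ hx).le (by positivity))
          (besselRieszKernel_nonneg n α γ _)

theorem besselRiesz_lower_pointwise_general (n : ℕ) (α γ : ℝ) (φ : ℝ → ℝ)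
    (hαn : α < n) (hγ : 0 ≤ γ)
    (hφpos : ∀ r : ℝ, 0 < r → 0 < φ r)
    (hφinc : IsAlmostIncreasing (fun r => φ r * r ^ (n : ℝ))) :
    ∃ C : ℝ, 0 < C ∧ ∀ x : EuclideanSpace ℝ (Fin n), x ≠ 0 →
      (∫⁻ y, ENNReal.ofReal (besselRieszKernel n α γ (x - y) * φ ‖y‖)) ≥
          (∫⁻ y in ball x (2 * ‖x‖),
            ENNReal.ofReal (besselRieszKernel n α γ (x - y) * φ ‖y‖)) ∧
        (∫⁻ y in ball x (2 * ‖x‖),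
            ENNReal.ofReal (besselRieszKernel n α γ (x - y) * φ ‖y‖)) ≥
          ENNReal.ofReal (C * (φ ‖x‖ * ‖x‖ ^ (n : ℝ) * besselRieszKernel n α γ x)) := by
  obtain ⟨c, hc, hpointwise⟩ :=
    exists_mul_le_besselRieszKernel_mul_of_mem_ball_two_smul hαn hγ hφpos hφinc
  set ω := (volume (ball (0 : EuclideanSpace ℝ (Fin n)) 1)).toReal
  have hω : 0 < ω :=
    ENNReal.toReal_pos (measure_ball_pos _ _ one_pos).ne' measure_ball_lt_top.ne
  refine ⟨c * ω, mul_pos hc hω, fun x hx => ⟨setLIntegral_le_lintegral _ _, ?_⟩⟩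
  calc ENNReal.ofReal (c * ω * (φ ‖x‖ * ‖x‖ ^ (n : ℝ) * besselRieszKernel n α γ x))
      = ENNReal.ofReal (c * (φ ‖x‖ * besselRieszKernel n α γ x) * ‖x‖ ^ (n : ℝ) * ω) := by
        ring_nf
    _ ≤ ∫⁻ y in ball ((2 : ℝ) • x) ‖x‖,
          ENNReal.ofReal (besselRieszKernel n α γ (x - y) * φ ‖y‖) :=
        ofReal_mul_rpow_le_setLIntegral_ball (norm_pos_iff.mpr hx)
          fun y hy => ENNReal.ofReal_le_ofReal (hpointwise x y hy)
    _ ≤ _ := lintegral_mono_set (ball_two_smul_subset_ball x)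

/-- if `r ↦ φ(r) r^n` is almost increasing and `f₀(x) = φ(|x|)`, then
there is `C > 0` such that for every `x ≠ 0`,
`I_{α,γ} f₀(x) ≥ ∫_{B(x,2|x|)} K_{α,γ}(x-y) f₀(y) dy ≥ C φ(|x|) |x|^n K_{α,γ}(x)`
(integrals of the nonnegative integrand interpreted as lower Lebesgue integrals). -/
theorem besselRiesz_lower_pointwise (n : ℕ) (hn : 1 ≤ n) (α γ : ℝ) (φ : ℝ → ℝ)
    (hα0 : 0 < α) (hαn : α < n) (hγ : 0 ≤ γ)
    (hφpos : ∀ r : ℝ, 0 < r → 0 < φ r)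
    (hφinc : IsAlmostIncreasing (fun r => φ r * r ^ (n : ℝ))) :
    ∃ C : ℝ, 0 < C ∧ ∀ x : EuclideanSpace ℝ (Fin n), x ≠ 0 →
      (∫⁻ y, ENNReal.ofReal (besselRieszKernel n α γ (x - y) * φ ‖y‖)) ≥
          (∫⁻ y in ball x (2 * ‖x‖),
            ENNReal.ofReal (besselRieszKernel n α γ (x - y) * φ ‖y‖)) ∧
        (∫⁻ y in ball x (2 * ‖x‖),
            ENNReal.ofReal (besselRieszKernel n α γ (x - y) * φ ‖y‖)) ≥
          ENNReal.ofReal (C * (φ ‖x‖ * ‖x‖ ^ (n : ℝ) * besselRieszKernel n α γ x)) :=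
  besselRiesz_lower_pointwise_general n α γ φ hαn hγ hφpos hφinc
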